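/- Let B be a groupoid, and let p : G → B and p' : G' → B be fibrations of groupoids. Then any functor f : G → G' over B (i.e. with p' ∘ f = p) that is an equivalence of groupoids admits a quasi-inverse over B: there exists a functor f' : G' → G with p ∘ f' = p' together with natural isomorphisms f' f ≅ id_G and f f' ≅ id_{G'} whose components all map to identity morphisms under p and p' respectively. -/

import Mathlib

/-! Let `g` be any quasi-inverse of `f`, with counit `ε : g ⋙ f ≅ 𝟭 G'`. The base isomorphisms
`p'.map (ε Y)⁻¹ : p' Y ⟶ p (g Y)` lift through the fibration `p` to isomorphisms `f' Y ≅ g Y`,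
and conjugating `g` by these lifts gives a functor `f'` lying strictly over `B` and isomorphic
to `g`. Transporting the equivalence along `f' ≅ g` makes its counit vertical; so is its unit,
since `f` maps the inverse unit at `X` to the counit at `f X` and `p = f ⋙ p'`. -/

open CategoryTheory

universe u u' u''

/-- A fibration of groupoids: every morphism of the base with target `p.obj e`
lifts to a morphism of the total groupoid with target `e`. -/
def IsGrpdFibration {E : Type*} [Groupoid E] {B : Type*} [Groupoid B] (p : E ⥤ B) : Prop :=
  ∀ (e : E) (b' : B) (h : b' ⟶ p.obj e),
    ∃ (e' : E) (g : e' ⟶ e) (he : p.obj e' = b'), p.map g = eqToHom he ≫ h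

theorem IsGrpdFibration.exists_lift_natTrans {C : Type*} [Category C] {E : Type*} [Groupoid E]
    {B : Type*} [Groupoid B] {p : E ⥤ B} (hp : IsGrpdFibration p) (F : C ⥤ E) (q : C ⥤ B)
    (α : q ⟶ F ⋙ p) :
    ∃ (F' : C ⥤ E) (β : F' ≅ F) (h : F' ⋙ p = q),
      ∀ X, p.map (β.hom.app X) = eqToHom (Functor.congr_obj h X) ≫ α.app X := by
  choose obj c hobj hc using fun X => hp (F.obj X) (q.obj X) (α.app X)
  let β : F.copyObj obj (fun X => (asIso (c X)).symm) ≅ F := (F.isoCopyObj _ _).symm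
  refine ⟨_, β, CategoryTheory.Functor.ext hobj fun X Y φ => ?_, hc⟩
  change p.map (c X ≫ F.map φ ≫ inv (c Y)) = eqToHom (hobj X) ≫ q.map φ ≫ eqToHom (hobj Y).symm
  have hα : α.app X ≫ p.map (F.map φ) ≫ inv (α.app Y) = q.map φ := by
    rw [← Functor.comp_map, ← α.naturality_assoc, IsIso.hom_inv_id, Category.comp_id]
  simp [hc, ← hα]

theorem equivalence_over_base_of_fibrations_general
    {G : Type u} [Groupoid G] {G' : Type u'} [Groupoid G'] {B : Type u''} [Groupoid B]
    (p : G ⥤ B) (p' : G' ⥤ B) (hp : IsGrpdFibration p)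
    (f : G ⥤ G') (hf : f ⋙ p' = p) (hfe : f.IsEquivalence) :
    ∃ f' : G' ⥤ G, f' ⋙ p = p' ∧
      ∃ (η : f ⋙ f' ≅ 𝟭 G) (η' : f' ⋙ f ≅ 𝟭 G'),
        (∀ X : G, ∃ e : p.obj (f'.obj (f.obj X)) = p.obj X,
          p.map (η.hom.app X) = eqToHom e) ∧
        (∀ Y : G', ∃ e : p'.obj (f.obj (f'.obj Y)) = p'.obj Y,
          p'.map (η'.hom.app Y) = eqToHom e) := by
  subst hf
  obtain ⟨e, rfl⟩ : ∃ e : G ≌ G', e.functor = f := ⟨f.asEquivalence, rfl⟩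
  obtain ⟨f', β, hf', hβ⟩ :=
    hp.exists_lift_natTrans e.inverse p' (Functor.whiskerRight e.counitInv p')
  let e' := e.changeInverse β.symm
  have counit_vertical : ∀ Y, ∃ h, p'.map (e'.counit.app Y) = eqToHom h := fun Y => by
    refine ⟨Functor.congr_obj hf' Y, ?_⟩
    have hcounit : e'.counit.app Y = e.functor.map (β.hom.app Y) ≫ e.counit.app Y := rfl
    rw [hcounit, p'.map_comp, ← Functor.comp_map, hβ Y]
    simp
  refine ⟨f', hf', e'.unitIso.symm, e'.counitIso, fun X => ?_, counit_vertical⟩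
  obtain ⟨h, hX⟩ := counit_vertical (e.functor.obj X)
  refine ⟨h, ?_⟩
  change p'.map (e'.functor.map (e'.unitInv.app X)) = _
  rwa [← e'.counit_app_functor]

/-- Let `p : G → B` and `p' : G' → B` be fibrations of groupoids.  Any functor
`f : G → G'` over `B` (i.e. `f ⋙ p' = p`) which is an equivalence of groupoids admits a
quasi-inverse over `B`: there is `f' : G' → G` with `f' ⋙ p = p'`, and natural
isomorphisms `f ⋙ f' ≅ 𝟭 G` and `f' ⋙ f ≅ 𝟭 G'` all of whose components are mapped to
identity morphisms by `p` resp. `p'`. -/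
theorem equivalence_over_base_of_fibrations
    {G : Type u} [Groupoid G] {G' : Type u'} [Groupoid G'] {B : Type u''} [Groupoid B]
    (p : G ⥤ B) (p' : G' ⥤ B) (hp : IsGrpdFibration p) (hp' : IsGrpdFibration p')
    (f : G ⥤ G') (hf : f ⋙ p' = p) (hfe : f.IsEquivalence) :
    ∃ f' : G' ⥤ G, f' ⋙ p = p' ∧
      ∃ (η : f ⋙ f' ≅ 𝟭 G) (η' : f' ⋙ f ≅ 𝟭 G'),
        (∀ X : G, ∃ e : p.obj (f'.obj (f.obj X)) = p.obj X,
          p.map (η.hom.app X) = eqToHom e) ∧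
        (∀ Y : G', ∃ e : p'.obj (f.obj (f'.obj Y)) = p'.obj Y,
          p'.map (η'.hom.app Y) = eqToHom e) :=
  equivalence_over_base_of_fibrations_general p p' hp f hf hfe
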